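/- arXiv:0707.1577 — 2 statements merged into one kernel-verified Lean document; each statement's English description precedes it below -/
import Mathlib

section
/- Under the setup of a longest S-cycle C in D (with δ⁰(D) ≥ ⌈(n+k)/2⌉ - 1, k ≥ 3, and C not Hamiltonian), the digraph H induced on the vertices outside C satisfies: for every vertex x of H, d^-_H(x) + d^+_H(x) ≥ |H| + 1, and consequently |H| ≥ k. -/
/-- `l` is a directed cycle in the digraph with edge relation `A`: at least two
distinct vertices, with consecutive vertices (cyclically) joined by edges. -/
def IsCycleList {V : Type*} (A : V → V → Prop) (l : List V) : Prop :=
  2 ≤ l.length ∧ l.Nodup ∧ l.Chain' A ∧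
    ∀ a ∈ l.getLast?, ∀ b ∈ l.head?, A a b

/-- The cycle `l` encounters the vertices `s 0, …, s (k-1)` in this cyclic order:
some rotation of `l` contains them as a sublist in this order. -/
def EncountersInOrder {V : Type*} {k : ℕ} (l : List V) (s : Fin k → V) : Prop :=
  ∃ r, List.Sublist (List.ofFn s) (l.rotate r)

/-!
A vertex `x` off the longest cycle `C` cannot be inserted between two consecutive vertices
`u → w` of `C`: splicing it in would give a longer cycle meeting `s` in the same order. Hence
`u ↦ C.next u` sends the in-neighbours of `x` on `C` injectively to vertices that are not
out-neighbours of `x`, so `x` has at most `|C|` neighbours on `C`, counted with direction.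
The semi-degree bound then leaves at least `|H| + k - 2` neighbours inside `H`, and since `x`
has at most `|H| - 1` in- and out-neighbours there, `|H| ≥ k`.
-/

open Finset

section Lists

variable {α : Type*} [DecidableEq α]

theorem List.Nodup.exists_isRotated_next_cons {l : List α} (hl : l.Nodup) (hlen : 2 ≤ l.length)
    {u : α} (hu : u ∈ l) : ∃ t, l ~r l.next u hu :: (t ++ [u]) := by
  obtain ⟨a, b, rfl⟩ := List.append_of_mem hu
  have hrot : a ++ u :: b ~r u :: (b ++ a) := List.isRotated_append
  obtain ⟨w, t, hwt⟩ : ∃ w t, b ++ a = w :: t := List.exists_cons_of_ne_nil fun h => by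
    have := congrArg List.length h
    simp only [List.length_append, List.length_cons, List.length_nil] at this hlen
    omega
  rw [hwt] at hrot
  refine ⟨t, ?_⟩
  rw [List.isRotated_next_eq hrot hl, List.next_cons_cons_eq]
  exact hrot.trans (List.isRotated_append (l := [u]))

theorem List.Nodup.card_filter_add_card_filter_le {l : List α} (hl : l.Nodup)
    {p q : α → Prop} [DecidablePred p] [DecidablePred q]
    (h : ∀ a (ha : a ∈ l), p a → ¬q (l.next a ha)) :
    #{a ∈ l.toFinset | p a} + #{a ∈ l.toFinset | q a} ≤ l.length := by
  set P := {a ∈ l.toFinset | p a}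
  set Q := {a ∈ l.toFinset | q a}
  -- `l.formPerm` is `l.next` extended to a permutation of `α`, so mapping `P` by it keeps `#P`.
  have hmem : ∀ b ∈ P.map l.formPerm.toEmbedding,
      ∃ a, ∃ ha : a ∈ l, p a ∧ b = l.next a ha := by
    simp only [P, Finset.mem_map, Finset.mem_filter, List.mem_toFinset, Equiv.coe_toEmbedding]
    rintro _ ⟨a, ⟨ha, hp⟩, rfl⟩
    exact ⟨a, ha, hp, List.formPerm_apply_mem_eq_next hl a ha⟩
  have hdisj : _root_.Disjoint (P.map l.formPerm.toEmbedding) Q := by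
    refine Finset.disjoint_left.2 fun b hbP hbQ => ?_
    obtain ⟨a, ha, hp, rfl⟩ := hmem b hbP
    exact h a ha hp (Finset.mem_filter.1 hbQ).2
  have hsub : P.map l.formPerm.toEmbedding ⊆ l.toFinset := fun b hb => by
    obtain ⟨a, ha, -, rfl⟩ := hmem b hb
    exact List.mem_toFinset.2 (List.next_mem l a ha)
  calc #P + #Q = #(P.map l.formPerm.toEmbedding ∪ Q) := by
        rw [card_union_of_disjoint hdisj, card_map]
    _ ≤ #l.toFinset := card_le_card (union_subset hsub (Finset.filter_subset _ _))
    _ = l.length := List.toFinset_card_of_nodup hl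

end Lists

theorem card_filter_and_lt_card_filter {α : Type*} {p q : α → Prop} [DecidablePred p]
    [DecidablePred q] (s : Finset α) {x : α} (hx : x ∈ s) (hp : p x) (hq : ¬q x) :
    #{a ∈ s | p a ∧ q a} < #{a ∈ s | p a} := by
  rw [← Finset.filter_filter]
  exact card_lt_card (filter_ssubset.2 ⟨x, Finset.mem_filter.2 ⟨hx, hp⟩, hq⟩)

section Cycles

variable {V : Type*} {A : V → V → Prop}

theorem isCycleList_iff_cycle_chain {l : List V} :
    IsCycleList A l ↔ 2 ≤ l.length ∧ l.Nodup ∧ Cycle.Chain A (l : Cycle V) := by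
  rcases l with - | ⟨a, t⟩
  · simp [IsCycleList]
  · simp only [IsCycleList, Cycle.chain_coe_cons, ← List.cons_append, List.isChain_append,
      List.head?_cons, Option.mem_some_iff, List.isChain_singleton, true_and]
    rfl

theorem List.IsRotated.isCycleList_iff {l l' : List V} (hr : l ~r l') :
    IsCycleList A l ↔ IsCycleList A l' := by
  rw [isCycleList_iff_cycle_chain, isCycleList_iff_cycle_chain, hr.perm.length_eq, hr.nodup_iff,
    Cycle.coe_eq_coe.2 hr]

theorem IsCycleList.cons {w x : V} {l : List V} (h : IsCycleList A (w :: l))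
    (hx : x ∉ w :: l) (hxw : A x w) (hlx : ∀ a ∈ (w :: l).getLast?, A a x) :
    IsCycleList A (x :: w :: l) := by
  obtain ⟨-, hnd, hch, -⟩ := h
  refine ⟨by simp, List.nodup_cons.2 ⟨hx, hnd⟩, List.isChain_cons_cons.2 ⟨hxw, hch⟩, ?_⟩
  simpa [List.getLast?_cons_cons] using hlx

variable {k : ℕ} {s : Fin k → V}

theorem List.IsRotated.encountersInOrder_iff {l l' : List V} (hr : l ~r l') :
    EncountersInOrder l s ↔ EncountersInOrder l' s := by
  suffices ∀ {l l' : List V}, l ~r l' → EncountersInOrder l s → EncountersInOrder l' s from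
    ⟨this hr, this hr.symm⟩
  rintro l l' hr ⟨r, hsub⟩
  obtain ⟨r', hr'⟩ := hr.symm.trans (List.IsRotated.forall l r).symm
  exact ⟨r', hr' ▸ hsub⟩

theorem EncountersInOrder.cons {l : List V} (h : EncountersInOrder l s) (x : V) :
    EncountersInOrder (x :: l) s := by
  obtain ⟨r, hsub⟩ := h
  rcases eq_or_ne l [] with rfl | hl
  · exact ⟨0, hsub.trans (by simp)⟩
  rw [← List.rotate_mod] at hsub
  have hj : r % l.length ≤ l.length := (Nat.mod_lt _ (List.length_pos_iff.2 hl)).le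
  refine ⟨r % l.length + 1, ?_⟩
  rw [List.rotate_cons_succ, List.rotate_eq_drop_append_take (by simp; omega),
    List.drop_append_of_le_length hj, List.take_append_of_le_length hj]
  rw [List.rotate_eq_drop_append_take hj] at hsub
  exact hsub.trans (by simp)

variable [DecidableEq V] {C : List V}

theorem IsCycleList.not_adj_next_of_longest (hC : IsCycleList A C)
    (hCs : EncountersInOrder C s)
    (hmax : ∀ C' : List V, IsCycleList A C' → EncountersInOrder C' s → C'.length ≤ C.length)
    {x : V} (hx : x ∉ C) {u : V} (hu : u ∈ C) (hux : A u x) : ¬A x (C.next u hu) := by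
  intro hxw
  obtain ⟨t, hrot⟩ := hC.2.1.exists_isRotated_next_cons hC.1 hu
  have hcyc := (hrot.isCycleList_iff.1 hC).cons (fun h => hx (hrot.mem_iff.2 h)) hxw
    fun a ha => by
      rw [← List.cons_append, List.getLast?_concat, Option.mem_some_iff] at ha
      exact ha ▸ hux
  have hlen := hmax _ hcyc ((hrot.encountersInOrder_iff.1 hCs).cons x)
  rw [hrot.perm.length_eq] at hlen
  simp at hlen

theorem card_in_add_card_out_le_of_longest [Fintype V] [DecidableRel A] (hC : IsCycleList A C)
    (hCs : EncountersInOrder C s)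
    (hmax : ∀ C' : List V, IsCycleList A C' → EncountersInOrder C' s → C'.length ≤ C.length)
    {x : V} (hx : x ∉ C) :
    #{v | A v x} + #{v | A x v} ≤
      #{v | v ∉ C ∧ A v x} + #{v | v ∉ C ∧ A x v} + C.length := by
  have hsplit : ∀ p : V → Prop, [DecidablePred p] →
      #{v | p v} = #{v | v ∉ C ∧ p v} + #{v ∈ C.toFinset | p v} := fun p _ => by
    rw [← Finset.card_filter_add_card_filter_not (s := {v | p v}) (· ∉ C)]
    congr 1 <;> congr 1 <;> ext v <;> simp [and_comm]
  have hcycle := hC.2.1.card_filter_add_card_filter_le (p := (A · x)) (q := (A x ·))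
    fun u hu hux => hC.not_adj_next_of_longest hCs hmax hx hu hux
  rw [hsplit (A · x), hsplit (A x ·)]
  omega

end Cycles

theorem H_degree_bound_and_order_general
    {V : Type*} [Fintype V] [DecidableEq V]
    (A : V → V → Prop) [DecidableRel A] (hirr : Irreflexive A)
    (n k : ℕ) (hn : n = Fintype.card V) (hk : 3 ≤ k)
    (hdeg : ∀ v : V, (n + k + 1) / 2 - 1 ≤ (Finset.univ.filter fun w => A v w).card ∧
                     (n + k + 1) / 2 - 1 ≤ (Finset.univ.filter fun w => A w v).card)
    (s : Fin k → V)
    (C : List V) (hC : IsCycleList A C) (hCs : EncountersInOrder C s)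
    (hmax : ∀ C' : List V, IsCycleList A C' → EncountersInOrder C' s → C'.length ≤ C.length)
    (hnotHam : ∃ v : V, v ∉ C) :
    (∀ x : V, x ∉ C →
      (Finset.univ.filter fun v => (v ∉ C : Prop)).card + 1 ≤
        (Finset.univ.filter fun v => v ∉ C ∧ A v x).card +
        (Finset.univ.filter fun v => v ∉ C ∧ A x v).card) ∧
    k ≤ (Finset.univ.filter fun v => (v ∉ C : Prop)).card := by
  have hCH : C.length + #{v | v ∉ C} = n := by
    rw [hn, ← card_univ, ← Finset.card_filter_add_card_filter_not (s := univ) (· ∈ C),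
      ← List.toFinset_card_of_nodup hC.2.1]
    congr 2
    ext
    simp
  have hbound : ∀ x ∉ C,
      #{v | v ∉ C} + k ≤ #{v | v ∉ C ∧ A v x} + #{v | v ∉ C ∧ A x v} + 2 := by
    intro x hx
    have := card_in_add_card_out_le_of_longest hC hCs hmax hx
    have := hdeg x
    omega
  refine ⟨fun x hx => by have := hbound x hx; omega, ?_⟩
  obtain ⟨x, hx⟩ := hnotHam
  have hin := card_filter_and_lt_card_filter (p := (· ∉ C)) (q := (A · x)) univ (mem_univ x) hx
    (hirr x)
  have hout := card_filter_and_lt_card_filter (p := (· ∉ C)) (q := (A x ·)) univ (mem_univ x) hx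
    (hirr x)
  have := hbound x hx
  omega

/-- Every vertex of $H$ satisfies $d^-_H(x)+d^+_H(x) \ge |H|+1$, and $|H| \ge k$. -/
theorem H_degree_bound_and_order
    {V : Type*} [Fintype V] [DecidableEq V]
    (A : V → V → Prop) [DecidableRel A] (hirr : Irreflexive A)
    (n k : ℕ) (hn : n = Fintype.card V) (hk : 3 ≤ k)
    (hdeg : ∀ v : V, (n + k + 1) / 2 - 1 ≤ (Finset.univ.filter fun w => A v w).card ∧
                     (n + k + 1) / 2 - 1 ≤ (Finset.univ.filter fun w => A w v).card)
    (s : Fin k → V) (hs : Function.Injective s)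
    (C : List V) (hC : IsCycleList A C) (hCs : EncountersInOrder C s)
    (hmax : ∀ C' : List V, IsCycleList A C' → EncountersInOrder C' s → C'.length ≤ C.length)
    (hnotHam : ∃ v : V, v ∉ C) :
    (∀ x : V, x ∉ C →
      (Finset.univ.filter fun v => (v ∉ C : Prop)).card + 1 ≤
        (Finset.univ.filter fun v => v ∉ C ∧ A v x).card +
        (Finset.univ.filter fun v => v ∉ C ∧ A x v).card) ∧
    k ≤ (Finset.univ.filter fun v => (v ∉ C : Prop)).card :=
  H_degree_bound_and_order_general A hirr n k hn hk hdeg s C hC hCs hmax hnotHam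
end

section
/- Under the setup of a longest S-cycle C in D (with δ⁰(D) ≥ ⌈(n+k)/2⌉ - 1, k ≥ 3, C not Hamiltonian, H the induced digraph outside C), no vertex of C that sends an edge to H has its successor on C receiving an edge from H. Formally: if v ∈ V(C) has an out-neighbour in V(H), then the successor v⁺ of v on C has no in-neighbour in V(H). -/
/-!
Write `a ⇝ b` when `b` is reachable from `a` inside `H`. If `u ∈ C` sends an edge to `a ∈ H`,
`a ⇝ b` and `b` sends an edge to the successor `u⁺`, the path from `a` to `b` can be spliced into
`C` between `u` and `u⁺`, giving a longer cycle that still encounters `S` in order. So for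
`a ⇝ b` the map `u ↦ u⁺` sends the in-neighbours of `a` on `C` to non-out-neighbours of `b`,
whence `d⁻_C(a) + d⁺_C(b) ≤ |C|`. As `d⁻_H(a) < |{z ∈ H | z ⇝ a}|` and similarly for `b`, the
bound `2δ⁰ + 2 ≥ n + k > n` forces `{z ∈ H | z ⇝ a}` and `{z ∈ H | b ⇝ z}` to meet, so `b ⇝ a`.
If `a ⇝ b` failed for some `a, b ∈ H`, then `{z | a ⇝ z}` and `{z | z ⇝ b}` would be disjoint,
and adding the inequalities for `(a, a)` and `(b, b)` would make `{z | z ⇝ a}` and `{z | b ⇝ z}`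
meet, giving `b ⇝ a` and hence `a ⇝ b`. So the out-neighbour of `v` in `H` reaches the
in-neighbour of `v⁺` in `H`, and splicing lengthens `C`.
-/

section Cycles

open List

variable {V : Type*} {A : V → V → Prop} {l l' : List V}

theorem isCycleList_iff_cycleChain :
    IsCycleList A l ↔ 2 ≤ l.length ∧ l.Nodup ∧ Cycle.Chain A (l : Cycle V) := by
  cases l with
  | nil => simp [IsCycleList]
  | cons x l =>
    simp only [IsCycleList, Cycle.chain_coe_cons, ← cons_append, isChain_append,
      isChain_singleton, true_and]
    exact Iff.rfl

theorem IsCycleList.isRotated (h : IsCycleList A l) (hr : l ~r l') : IsCycleList A l' := by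
  rw [isCycleList_iff_cycleChain] at h ⊢
  exact ⟨hr.perm.length_eq ▸ h.1, hr.nodup_iff.1 h.2.1, Cycle.coe_eq_coe.2 hr ▸ h.2.2⟩

theorem IsCycleList.append {p : List V} (hl : IsCycleList A l) (hp : p ≠ []) (hpn : p.Nodup)
    (hdisj : ∀ x ∈ p, x ∉ l) (hpA : p.IsChain A) (hin : ∀ u ∈ l.getLast?, ∀ a ∈ p.head?, A u a)
    (hout : ∀ b ∈ p.getLast?, ∀ w ∈ l.head?, A b w) : IsCycleList A (l ++ p) := by
  obtain ⟨hlen, hln, hlA, -⟩ := hl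
  refine ⟨by simp; omega, nodup_append.2 ⟨hln, hpn, fun x hx y hy hxy => hdisj y hy (hxy ▸ hx)⟩,
    isChain_append.2 ⟨hlA, hpA, hin⟩, ?_⟩
  rw [getLast?_append_of_ne_nil _ hp, head?_append_of_ne_nil _ (ne_nil_of_length_pos (by omega))]
  exact hout

theorem EncountersInOrder.isRotated {k : ℕ} {s : Fin k → V} (h : EncountersInOrder l s)
    (hr : l ~r l') : EncountersInOrder l' s := by
  obtain ⟨r, hsub⟩ := h
  obtain ⟨r', hr'⟩ := hr.symm.trans ⟨r, rfl⟩
  exact ⟨r', hr' ▸ hsub⟩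

theorem EncountersInOrder.append {k : ℕ} {s : Fin k → V} (h : EncountersInOrder l s)
    (p : List V) : EncountersInOrder (l ++ p) s := by
  obtain ⟨r, hsub⟩ := h
  rcases eq_or_ne l [] with rfl | hl
  · exact ⟨0, (eq_nil_of_sublist_nil hsub) ▸ nil_sublist _⟩
  have hr : r % l.length ≤ l.length := (Nat.mod_lt _ (length_pos_of_ne_nil hl)).le
  refine ⟨r % l.length, ?_⟩
  rw [rotate_eq_drop_append_take_mod] at hsub
  rw [rotate_eq_drop_append_take (by simp; omega), drop_append_of_le_length hr,
    take_append_of_le_length hr, append_assoc]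
  exact hsub.trans ((sublist_append_right _ _).append_left _)

theorem List.Nodup.exists_isRotated_cons_formPerm [DecidableEq V] (hl : l.Nodup)
    (hlen : 2 ≤ l.length) {x : V} (hx : x ∈ l) : ∃ t, l ~r x :: l.formPerm x :: t := by
  obtain ⟨s, t, rfl⟩ := append_of_mem hx
  obtain ⟨y, u, hyu⟩ : ∃ y u, t ++ s = y :: u := by
    refine exists_cons_of_ne_nil fun h => ?_
    rw [append_eq_nil_iff] at h
    simp [h] at hlen
  have hr : s ++ x :: t ~r x :: y :: u := hyu ▸ isRotated_append
  rw [formPerm_eq_of_isRotated hl hr, formPerm_apply_head _ _ _ (hr.nodup_iff.1 hl)]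
  exact ⟨u, hr⟩

theorem List.exists_nodup_isChain_of_relationReflTransGen {r : V → V → Prop} {a b : V}
    (h : Relation.ReflTransGen r a b) :
    ∃ p : List V, p.head? = some a ∧ p.getLast? = some b ∧ p.Nodup ∧ p.IsChain r := by
  classical
  induction h using Relation.ReflTransGen.head_induction_on with
  | refl => exact ⟨[b], rfl, rfl, nodup_singleton b, isChain_singleton b⟩
  | @head x c hxc _ ih =>
    obtain ⟨p, hph, hpl, hpn, hpr⟩ := ih
    by_cases hxp : x ∈ p
    · obtain ⟨s, t, rfl⟩ := append_of_mem hxp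
      refine ⟨x :: t, rfl, ?_, hpn.sublist (sublist_append_right _ _), hpr.right_of_append⟩
      rwa [getLast?_append_of_ne_nil _ (cons_ne_nil x t)] at hpl
    · have hp : p ≠ [] := by rintro rfl; simp at hph
      refine ⟨x :: p, rfl, ?_, nodup_cons.2 ⟨hxp, hpn⟩, isChain_cons.2 ⟨?_, hpr⟩⟩
      · rwa [← singleton_append, getLast?_append_of_ne_nil _ hp]
      · simpa [hph] using hxc

end Cycles

open Finset

theorem Finset.forall_rel_of_card_lt_card_add_card {α : Type*} [DecidableEq α]
    {R : α → α → Prop} [DecidableRel R] [IsPreorder α R] {s : Finset α}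
    (h : ∀ a ∈ s, ∀ b ∈ s, R a b → #s < #{z ∈ s | R z a} + #{z ∈ s | R b z}) :
    ∀ a ∈ s, ∀ b ∈ s, R a b := by
  have hsymm : ∀ a ∈ s, ∀ b ∈ s, R a b → R b a := by
    intro a ha b hb hab
    obtain ⟨z, hz⟩ := inter_nonempty_of_card_lt_card_add_card (filter_subset _ _)
      (filter_subset _ _) (h a ha b hb hab)
    simp only [mem_inter, mem_filter] at hz
    exact _root_.trans hz.2.2 hz.1.2
  intro a ha b hb
  by_contra hab
  have hdisj : #{z ∈ s | R a z} + #{z ∈ s | R z b} ≤ #s := by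
    rw [← card_union_of_disjoint (disjoint_filter.2 fun z _ haz hzb => hab (_root_.trans haz hzb))]
    exact card_le_card (union_subset (filter_subset _ _) (filter_subset _ _))
  have hba : #s < #{z ∈ s | R z a} + #{z ∈ s | R b z} := by
    have := h a ha a ha (refl a)
    have := h b hb b hb (refl b)
    omega
  obtain ⟨z, hz⟩ := inter_nonempty_of_card_lt_card_add_card (filter_subset _ _)
    (filter_subset _ _) hba
  simp only [mem_inter, mem_filter] at hz
  exact hab (hsymm b hb a ha (_root_.trans hz.2.2 hz.1.2))

theorem Finset.card_filter_eq_card_filter_add_card_filter_compl {α : Type*} [Fintype α]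
    [DecidableEq α] (s : Finset α) (p : α → Prop) [DecidablePred p] :
    #{x | p x} = #{x ∈ s | p x} + #{x ∈ sᶜ | p x} := by
  rw [← card_union_of_disjoint (disjoint_filter_filter disjoint_compl_right), ← filter_union,
    union_compl]

theorem List.card_filter_add_card_filter_formPerm_le {α : Type*} [DecidableEq α] {l : List α}
    (hl : l.Nodup) {P Q : α → Prop} [DecidablePred P] [DecidablePred Q]
    (h : ∀ x ∈ l, P x → ¬ Q (l.formPerm x)) :
    #{x ∈ l.toFinset | P x} + #{x ∈ l.toFinset | Q x} ≤ l.length := by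
  have himage : {x ∈ l.toFinset | P x}.image l.formPerm ⊆ {x ∈ l.toFinset | ¬ Q x} := by
    refine image_subset_iff.2 fun x hx => ?_
    rw [Finset.mem_filter, mem_toFinset] at hx ⊢
    exact ⟨l.formPerm_apply_mem_of_mem hx.1, h x hx.1 hx.2⟩
  calc #{x ∈ l.toFinset | P x} + #{x ∈ l.toFinset | Q x}
      = #({x ∈ l.toFinset | P x}.image l.formPerm) + #{x ∈ l.toFinset | Q x} := by
        rw [card_image_of_injective _ l.formPerm.injective]
    _ ≤ #{x ∈ l.toFinset | ¬ Q x} + #{x ∈ l.toFinset | Q x} := by gcongr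
    _ = l.length := by rw [add_comm, card_filter_add_card_filter_not, toFinset_card_of_nodup hl]

structure IsLongestSCycle {V : Type*} {k : ℕ} (A : V → V → Prop) (s : Fin k → V) (C : List V) :
    Prop where
  isCycleList : IsCycleList A C
  encountersInOrder : EncountersInOrder C s
  length_le : ∀ C' : List V, IsCycleList A C' → EncountersInOrder C' s → C'.length ≤ C.length

/-- `b` is reachable from `a` along edges whose heads avoid `C`; for `a ∉ C` these are the
paths of `H = D - V(C)`. -/
def ReachOutside {V : Type*} (A : V → V → Prop) (C : List V) : V → V → Prop :=
  Relation.ReflTransGen fun x y => A x y ∧ y ∉ C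

section LongestSCycle

variable {V : Type*} {A : V → V → Prop} {C : List V} {a b : V}

instance : IsPreorder V (ReachOutside A C) :=
  inferInstanceAs (IsPreorder V (Relation.ReflTransGen _))

noncomputable instance : DecidableRel (ReachOutside A C) := Classical.decRel _

theorem ReachOutside.exists_path (h : ReachOutside A C a b) (ha : a ∉ C) :
    ∃ p : List V, p.head? = some a ∧ p.getLast? = some b ∧ p.Nodup ∧ p.IsChain A ∧
      ∀ x ∈ p, x ∉ C := by
  obtain ⟨p, hph, hpl, hpn, hpr⟩ := List.exists_nodup_isChain_of_relationReflTransGen h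
  refine ⟨p, hph, hpl, hpn, hpr.imp fun _ _ => And.left,
    hpr.induction (· ∉ C) p (fun _ _ hxy _ => hxy.2) fun hp => ?_⟩
  obtain rfl : p.head hp = a := Option.some_inj.1 ((List.head?_eq_some_head hp).symm.trans hph)
  exact ha

variable {k : ℕ} {s : Fin k → V}

theorem IsLongestSCycle.not_reachOutside (hC : IsLongestSCycle A s C) {v w : V} {t : List V}
    (hgap : C ~r v :: w :: t) (ha : a ∉ C) (hva : A v a) (hbw : A b w) :
    ¬ ReachOutside A C a b := by
  intro hab
  obtain ⟨p, hph, hpl, hpn, hpA, hpC⟩ := hab.exists_path ha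
  have hp : p ≠ [] := by rintro rfl; simp at hph
  have hCL : C ~r (w :: t) ++ [v] := hgap.trans (List.isRotated_append (l := [v]))
  have hcycle : IsCycleList A ((w :: t) ++ [v] ++ p) :=
    (hC.isCycleList.isRotated hCL).append hp hpn (fun x hx hxL => hpC x hx (hCL.mem_iff.2 hxL))
      hpA (by rw [List.getLast?_concat]; simpa [hph] using hva) (by simp [hpl, hbw])
  have hlong := hC.length_le _ hcycle ((hC.encountersInOrder.isRotated hCL).append p)
  have hlen := hCL.perm.length_eq
  have hp0 := List.length_pos_of_ne_nil hp
  simp only [List.length_append, List.length_cons, List.length_nil] at hlong hlen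
  omega

end LongestSCycle

section Counting

variable {V : Type*} [DecidableEq V] {A : V → V → Prop} [DecidableRel A] {C : List V} {a b : V}
  {k : ℕ} {s : Fin k → V}

theorem IsLongestSCycle.card_filter_add_card_filter_le (hC : IsLongestSCycle A s C)
    (ha : a ∉ C) (hab : ReachOutside A C a b) :
    #{x ∈ C.toFinset | A x a} + #{x ∈ C.toFinset | A b x} ≤ C.length :=
  C.card_filter_add_card_filter_formPerm_le hC.isCycleList.2.1 fun _ hx hxa hbx =>
    have ⟨_, hgap⟩ := hC.isCycleList.2.1.exists_isRotated_cons_formPerm hC.isCycleList.1 hx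
    hC.not_reachOutside hgap ha hxa hbx hab

variable [Fintype V]

theorem card_filter_compl_adj_lt_card_reachOutside_left (hirr : ∀ x, ¬ A x x) (ha : a ∉ C) :
    #{x ∈ C.toFinsetᶜ | A a x} < #{x ∈ C.toFinsetᶜ | ReachOutside A C a x} := by
  refine card_lt_card ((ssubset_iff_of_subset fun x hx => ?_).2 ⟨a, ?_, by simp [hirr a]⟩)
  · rw [mem_filter] at hx ⊢
    exact ⟨hx.1, .single ⟨hx.2, by simpa using hx.1⟩⟩
  · simpa [ha] using refl_of (ReachOutside A C) a

theorem card_filter_compl_adj_lt_card_reachOutside_right (hirr : ∀ x, ¬ A x x) (ha : a ∉ C) :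
    #{x ∈ C.toFinsetᶜ | A x a} < #{x ∈ C.toFinsetᶜ | ReachOutside A C x a} := by
  refine card_lt_card ((ssubset_iff_of_subset fun x hx => ?_).2 ⟨a, ?_, by simp [hirr a]⟩)
  · rw [mem_filter] at hx ⊢
    exact ⟨hx.1, .single ⟨hx.2, ha⟩⟩
  · simpa [ha] using refl_of (ReachOutside A C) a

theorem IsLongestSCycle.card_compl_lt_card_add_card (hirr : ∀ x, ¬ A x x)
    (hC : IsLongestSCycle A s C) {δ : ℕ} (hδ : Fintype.card V < 2 * δ + 2)
    (hdeg : ∀ v, δ ≤ #{w | A v w} ∧ δ ≤ #{w | A w v})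
    (ha : a ∉ C) (hb : b ∉ C) (hab : ReachOutside A C a b) :
    #C.toFinsetᶜ < #{x ∈ C.toFinsetᶜ | ReachOutside A C x a} +
      #{x ∈ C.toFinsetᶜ | ReachOutside A C b x} := by
  have hin := card_filter_eq_card_filter_add_card_filter_compl C.toFinset (A · a)
  have hout := card_filter_eq_card_filter_add_card_filter_compl C.toFinset (A b ·)
  have hcycle := hC.card_filter_add_card_filter_le ha hab
  have hreach_a := card_filter_compl_adj_lt_card_reachOutside_right hirr ha
  have hreach_b := card_filter_compl_adj_lt_card_reachOutside_left hirr hb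
  have hcard : C.length + #C.toFinsetᶜ = Fintype.card V := by
    rw [← List.toFinset_card_of_nodup hC.isCycleList.2.1, card_add_card_compl]
  have := (hdeg a).2
  have := (hdeg b).1
  omega

theorem IsLongestSCycle.reachOutside (hirr : ∀ x, ¬ A x x) (hC : IsLongestSCycle A s C)
    {δ : ℕ} (hδ : Fintype.card V < 2 * δ + 2) (hdeg : ∀ v, δ ≤ #{w | A v w} ∧ δ ≤ #{w | A w v})
    (ha : a ∉ C) (hb : b ∉ C) : ReachOutside A C a b :=
  forall_rel_of_card_lt_card_add_card (s := C.toFinsetᶜ)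
    (fun _ ha _ hb hab => hC.card_compl_lt_card_add_card hirr hδ hdeg (by simpa using ha)
      (by simpa using hb) hab) a (by simpa using ha) b (by simpa using hb)

end Counting

theorem no_T_vertex_followed_by_F_vertex_general
    {V : Type*} [Fintype V]
    (A : V → V → Prop) [DecidableRel A] (hirr : Irreflexive A)
    (n k : ℕ) (hn : n = Fintype.card V) (hk : 3 ≤ k)
    (hdeg : ∀ v : V, (n + k + 1) / 2 - 1 ≤ (Finset.univ.filter fun w => A v w).card ∧
                     (n + k + 1) / 2 - 1 ≤ (Finset.univ.filter fun w => A w v).card)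
    (s : Fin k → V)
    (C : List V) (hC : IsCycleList A C) (hCs : EncountersInOrder C s)
    (hmax : ∀ C' : List V, IsCycleList A C' → EncountersInOrder C' s → C'.length ≤ C.length) :
    ∀ v w : V, (∃ r, List.IsPrefix [v, w] (C.rotate r)) →
      (∃ h : V, h ∉ C ∧ A v h) → ¬ ∃ h : V, h ∉ C ∧ A h w := by
  classical
  rintro v w ⟨r, t, hvw⟩ ⟨h₁, hh₁, hvh₁⟩ ⟨h₂, hh₂, hh₂w⟩
  have hlongest : IsLongestSCycle A s C := ⟨hC, hCs, hmax⟩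
  have hδ : Fintype.card V < 2 * ((n + k + 1) / 2 - 1) + 2 := by omega
  exact hlongest.not_reachOutside ⟨r, hvw.symm⟩ hh₁ hvh₁ hh₂w
    (hlongest.reachOutside hirr hδ hdeg hh₁ hh₂)

/-- No vertex of $C$ sending an edge to $H$ has its successor on $C$ receiving
an edge from $H$. -/
theorem no_T_vertex_followed_by_F_vertex
    {V : Type*} [Fintype V] [DecidableEq V]
    (A : V → V → Prop) [DecidableRel A] (hirr : Irreflexive A)
    (n k : ℕ) (hn : n = Fintype.card V) (hk : 3 ≤ k)
    (hdeg : ∀ v : V, (n + k + 1) / 2 - 1 ≤ (Finset.univ.filter fun w => A v w).card ∧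
                     (n + k + 1) / 2 - 1 ≤ (Finset.univ.filter fun w => A w v).card)
    (s : Fin k → V) (hs : Function.Injective s)
    (C : List V) (hC : IsCycleList A C) (hCs : EncountersInOrder C s)
    (hmax : ∀ C' : List V, IsCycleList A C' → EncountersInOrder C' s → C'.length ≤ C.length)
    (hnotHam : ∃ v : V, v ∉ C) :
    ∀ v w : V, (∃ r, List.IsPrefix [v, w] (C.rotate r)) →
      (∃ h : V, h ∉ C ∧ A v h) → ¬ ∃ h : V, h ∉ C ∧ A h w :=
  no_T_vertex_followed_by_F_vertex_general A hirr n k hn hk hdeg s C hC hCs hmax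
end
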